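/- For every λ > 0, ∫₀^π∫₀^π π^{-2} (λ + 4sin²(q₁/2) + 4sin²(q₂/2))^{-1} dq₁dq₂ = (2/(π(λ+4))) · K(4/(λ+4)), where K is the complete elliptic integral of the first kind with modulus convention K(k) = ∫₀¹ dx/√((1−x²)(1−k²x²)). -/

import Mathlib

/-!
Since `4 sin²(q/2) = 2 - 2 cos q`, the inner integral is the classical
`∫₀^π dq / (A - B cos q) = π / √(A² - B²)` with `A = λ + 4 sin²(q₁/2) + 2`, `B = 2`.
With `k = 4/(λ+4)` one has `A² - B² = (λ+4)² (1 - k + k sin²(q₁/2)) (1 + k sin²(q₁/2))`,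
and the monotone substitution `x = sin(q/2) / √(1 - k + k sin²(q/2))` of `[0, π]` onto `[0, 1]`
turns `2 K(k)` into
`∫₀^π dq / √((1 - k + k sin²(q/2)) (1 + k sin²(q/2)))`.
-/

open MeasureTheory Real intervalIntegral

/-- The complete elliptic integral of the first kind,
`K(k) = ∫₀¹ dx/√((1−x²)(1−k²x²))`. -/
noncomputable def ellipticK (k : ℝ) : ℝ :=
  ∫ x in (0:ℝ)..1, 1 / Real.sqrt ((1 - x ^ 2) * (1 - k ^ 2 * x ^ 2))

section CosineIntegral

variable {A B : ℝ}

lemma sub_mul_cos_pos (hAB : |B| < A) (q : ℝ) : 0 < A - B * cos q := by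
  have : B * cos q ≤ |B| := by
    calc B * cos q ≤ |B * cos q| := le_abs_self _
      _ = |B| * |cos q| := abs_mul _ _
      _ ≤ |B| := mul_le_of_le_one_right (abs_nonneg _) (abs_cos_le_one q)
  linarith

/-- The textbook primitive `(2/u) arctan (√((A+B)/(A-B)) tan (q/2))`, `u = √(A² - B²)`,
rewritten by the arctan subtraction formula so that it has no jump at `q = π`. -/
noncomputable def invSubMulCosPrimitive (A B q : ℝ) : ℝ :=
  (q + 2 * arctan ((√(A ^ 2 - B ^ 2) - (A - B)) * sin q /
    ((A - B) * (1 + cos q) + √(A ^ 2 - B ^ 2) * (1 - cos q)))) / √(A ^ 2 - B ^ 2)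

lemma hasDerivAt_invSubMulCosPrimitive (hAB : |B| < A) (q : ℝ) :
    HasDerivAt (invSubMulCosPrimitive A B) (A - B * cos q)⁻¹ q := by
  unfold invSubMulCosPrimitive
  set u := √(A ^ 2 - B ^ 2)
  set p := A - B
  have hp : 0 < p := by have := le_abs_self B; simp only [p]; linarith
  have hu2 : u ^ 2 = A ^ 2 - B ^ 2 := sq_sqrt (by nlinarith [abs_nonneg B, sq_abs B])
  have hu : 0 < u := sqrt_pos.2 (by nlinarith [abs_nonneg B, sq_abs B])
  have hc := neg_one_le_cos q
  have hc' := cos_le_one q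
  have hD : 0 < p * (1 + cos q) + u * (1 - cos q) := by
    rcases hc'.lt_or_eq with hc' | hc'
    · nlinarith [mul_pos hu (sub_pos.2 hc')]
    · rw [hc']; linarith
  have hN : HasDerivAt (fun q => (u - p) * sin q) ((u - p) * cos q) q :=
    (hasDerivAt_sin q).const_mul _
  have hD' : HasDerivAt (fun q => p * (1 + cos q) + u * (1 - cos q)) ((u - p) * sin q) q := by
    refine ((((hasDerivAt_cos q).const_add 1).const_mul p).fun_add
      (((hasDerivAt_cos q).const_sub 1).const_mul u)).congr_deriv ?_
    ring
  refine (((hasDerivAt_id' q).fun_add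
    ((hN.fun_div hD' hD.ne').arctan.const_mul 2)).div_const u).congr_deriv ?_
  set c := cos q
  set s := sin q
  set D := p * (1 + c) + u * (1 - c)
  have hsc : s ^ 2 + c ^ 2 = 1 := sin_sq_add_cos_sq q
  have hnorm : D ^ 2 + ((u - p) * s) ^ 2 = 4 * p * (A - B * c) := by
    simp only [D, p]
    linear_combination (2 - 2 * c) * hu2 + (u - (A - B)) ^ 2 * hsc
  have hnum : 4 * p * (A - B * c) + 2 * ((u - p) * c * D - (u - p) * s * ((u - p) * s))
      = 4 * p * u := by
    simp only [D, p]
    linear_combination (2 * c - 2) * hu2 - 2 * (u - (A - B)) ^ 2 * hsc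
  have hAc : 0 < A - B * c := sub_mul_cos_pos hAB q
  generalize A - B * c = E at hAc hnorm hnum ⊢
  have harctan : ∀ N X : ℝ, 1 / (1 + (N / D) ^ 2) * (X / D ^ 2) = X / (D ^ 2 + N ^ 2) := by
    intro N X
    field_simp
  rw [harctan, hnorm]
  field_simp
  linear_combination hnum

theorem integral_inv_sub_mul_cos (hAB : |B| < A) :
    ∫ q in (0:ℝ)..π, (A - B * cos q)⁻¹ = π / √(A ^ 2 - B ^ 2) := by
  have hcont : Continuous fun q => (A - B * cos q)⁻¹ :=
    (continuous_const.sub (continuous_const.mul continuous_cos)).inv₀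
      fun q => (sub_mul_cos_pos hAB q).ne'
  rw [integral_eq_sub_of_hasDerivAt (fun q _ => hasDerivAt_invSubMulCosPrimitive hAB q)
    (hcont.intervalIntegrable 0 π)]
  simp [invSubMulCosPrimitive]

end CosineIntegral

lemma four_mul_sin_half_sq (x : ℝ) : 4 * sin (x / 2) ^ 2 = 2 - 2 * cos x := by
  rw [sin_sq_eq_half_sub, mul_div_cancel₀ x two_ne_zero]
  ring

theorem integral_inv_add_four_mul_sin_half_sq {a : ℝ} (ha : 0 < a) :
    ∫ q in (0:ℝ)..π, (a + 4 * sin (q / 2) ^ 2)⁻¹ = π / √(a * (a + 4)) := by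
  have h := integral_inv_sub_mul_cos (A := a + 2) (B := 2) (by rw [abs_two]; linarith)
  simp_rw [four_mul_sin_half_sq]
  convert h using 3 <;> ring

section EllipticSubstitution

variable {k : ℝ}

lemma one_sub_add_mul_sin_sq_pos (hk : k < 1) (x : ℝ) : 0 < 1 - k + k * sin x ^ 2 := by
  rcases le_or_gt k 0 with h | h
  · nlinarith [mul_nonneg (neg_nonneg.2 h) (sub_nonneg.2 (sin_sq_le_one x))]
  · nlinarith [mul_nonneg h.le (sq_nonneg (sin x))]

lemma one_add_mul_sin_sq_pos (hk : -1 < k) (x : ℝ) : 0 < 1 + k * sin x ^ 2 := by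
  rcases le_or_gt 0 k with h | h
  · positivity
  · nlinarith [mul_le_mul_of_nonpos_left (sin_sq_le_one x) h.le]

noncomputable def ellipticSubst (k q : ℝ) : ℝ :=
  sin (q / 2) / √(1 - k + k * sin (q / 2) ^ 2)

lemma hasDerivAt_ellipticSubst (hk : k < 1) (q : ℝ) :
    HasDerivAt (ellipticSubst k)
      ((1 - k) / 2 * cos (q / 2) /
        ((1 - k + k * sin (q / 2) ^ 2) * √(1 - k + k * sin (q / 2) ^ 2))) q := by
  have hH := one_sub_add_mul_sin_sq_pos hk (q / 2)
  have hsin : HasDerivAt (fun q => sin (q / 2)) (cos (q / 2) * (1 / 2)) q :=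
    ((hasDerivAt_id q).div_const 2).sin
  have hsqrt := (((hsin.pow 2).const_mul k).const_add (1 - k)).sqrt hH.ne'
  refine (hsin.div hsqrt (sqrt_pos.2 hH).ne').congr_deriv ?_
  have hw := sq_sqrt hH.le
  have hw0 := sqrt_pos.2 hH
  generalize √(1 - k + k * sin (q / 2) ^ 2) = w at hw hw0 ⊢
  rw [← hw]
  field_simp
  norm_num
  linear_combination 2 * cos (q / 2) * hw

lemma ellipticSubst_zero : ellipticSubst k 0 = 0 := by
  simp [ellipticSubst]

lemma ellipticSubst_pi : ellipticSubst k π = 1 := by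
  simp [ellipticSubst]

lemma ellipticSubst_deriv_mul_integrand (hk₀ : -1 < k) (hk₁ : k < 1) {q : ℝ}
    (hq : 0 < cos (q / 2)) :
    (1 - k) / 2 * cos (q / 2) /
        ((1 - k + k * sin (q / 2) ^ 2) * √(1 - k + k * sin (q / 2) ^ 2)) *
      (1 / √((1 - ellipticSubst k q ^ 2) * (1 - k ^ 2 * ellipticSubst k q ^ 2)))
      = (√((1 - k + k * sin (q / 2) ^ 2) * (1 + k * sin (q / 2) ^ 2)))⁻¹ / 2 := by
  have hH := one_sub_add_mul_sin_sq_pos hk₁ (q / 2)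
  have hH' := one_add_mul_sin_sq_pos hk₀ (q / 2)
  have hsc := sin_sq_add_cos_sq (q / 2)
  have hg : ellipticSubst k q ^ 2 = sin (q / 2) ^ 2 / (1 - k + k * sin (q / 2) ^ 2) := by
    rw [ellipticSubst, div_pow, sq_sqrt hH.le]
  have hprod : (1 - ellipticSubst k q ^ 2) * (1 - k ^ 2 * ellipticSubst k q ^ 2)
      = ((1 - k) * cos (q / 2) / (1 - k + k * sin (q / 2) ^ 2)) ^ 2
          * (1 + k * sin (q / 2) ^ 2) := by
    rw [hg]
    generalize hHdef : 1 - k + k * sin (q / 2) ^ 2 = H at hH ⊢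
    field_simp
    subst hHdef
    linear_combination -(1 - k) ^ 2 * (1 + k * sin (q / 2) ^ 2) * hsc
  have hk : 0 < 1 - k := by linarith
  rw [hprod, sqrt_mul (sq_nonneg _), sqrt_sq (by positivity), sqrt_mul hH.le]
  field_simp

theorem two_mul_ellipticK_eq_integral (hk₀ : -1 < k) (hk₁ : k < 1) :
    2 * ellipticK k = ∫ q in (0:ℝ)..π,
      (√((1 - k + k * sin (q / 2) ^ 2) * (1 + k * sin (q / 2) ^ 2)))⁻¹ := by
  have hcos : ∀ q ∈ Set.Ioo 0 π, 0 < cos (q / 2) := fun q hq =>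
    cos_pos_of_mem_Ioo ⟨by linarith [hq.1, pi_pos], by linarith [hq.2]⟩
  have hsubst := integral_Icc_deriv_smul_of_deriv_nonneg
    (g := fun x => 1 / √((1 - x ^ 2) * (1 - k ^ 2 * x ^ 2)))
    (continuous_iff_continuousAt.2 fun q =>
      (hasDerivAt_ellipticSubst hk₁ q).continuousAt).continuousOn
    (fun q _ => hasDerivAt_ellipticSubst hk₁ q)
    (fun q hq => div_nonneg (mul_nonneg (by linarith) (hcos q hq).le)
      (mul_nonneg (one_sub_add_mul_sin_sq_pos hk₁ _).le (sqrt_nonneg _)))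
    pi_pos.le
  rw [ellipticSubst_zero, ellipticSubst_pi] at hsubst
  rw [ellipticK, integral_of_le zero_le_one, ← integral_Icc_eq_integral_Ioc, ← hsubst,
    integral_Icc_eq_integral_Ioo, integral_of_le pi_pos.le, integral_Ioc_eq_integral_Ioo,
    ← MeasureTheory.integral_const_mul]
  refine setIntegral_congr_fun measurableSet_Ioo fun q hq => ?_
  rw [smul_eq_mul, ellipticSubst_deriv_mul_integrand hk₀ hk₁ (hcos q hq)]
  ring

end EllipticSubstitution

theorem W2_closed_form (lam : ℝ) (hlam : 0 < lam) :
    ∫ q1 in (0:ℝ)..Real.pi, ∫ q2 in (0:ℝ)..Real.pi,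
        (1 / Real.pi ^ 2) * (lam + 4 * Real.sin (q1 / 2) ^ 2 + 4 * Real.sin (q2 / 2) ^ 2)⁻¹
      = (2 / (Real.pi * (lam + 4))) * ellipticK (4 / (lam + 4)) := by
  set k := 4 / (lam + 4) with hk
  have hl : 0 < lam + 4 := by linarith
  have hk₀ : -1 < k := by linarith [show 0 < k by positivity]
  have hk₁ : k < 1 := by rw [hk, div_lt_one hl]; linarith
  have hfactor : ∀ x : ℝ, (lam + 4 * sin x ^ 2) * (lam + 4 * sin x ^ 2 + 4)
      = (lam + 4) ^ 2 * ((1 - k + k * sin x ^ 2) * (1 + k * sin x ^ 2)) := by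
    intro x
    rw [hk]
    field_simp
    ring
  have hinner : ∀ q1 : ℝ, ∫ q2 in (0:ℝ)..π,
      (1 / π ^ 2) * (lam + 4 * sin (q1 / 2) ^ 2 + 4 * sin (q2 / 2) ^ 2)⁻¹
      = (π * (lam + 4))⁻¹
          * (√((1 - k + k * sin (q1 / 2) ^ 2) * (1 + k * sin (q1 / 2) ^ 2)))⁻¹ := by
    intro q1
    rw [intervalIntegral.integral_const_mul,
      integral_inv_add_four_mul_sin_half_sq (by positivity), hfactor, sqrt_mul (sq_nonneg _),
      sqrt_sq hl.le]
    field_simp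
  simp_rw [hinner]
  rw [intervalIntegral.integral_const_mul, ← two_mul_ellipticK_eq_integral hk₀ hk₁]
  field_simp
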